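/- arXiv:2506.07067 — 4 statements merged into one kernel-verified Lean document; each statement's English description precedes it below -/
import Mathlib

section
/- Let r1 > 0, r2 > 0, r3 ∈ ℝ and define F̄(x) = r1 x^{-r2} (log x)^{r3} for large x. Then the function G(y) = r1^{1/r2} r2^{-r3/r2} y^{-1/r2} (log(1/y))^{r3/r2} is an asymptotic inverse of F̄, i.e. F̄(G(y))/y → 1 as y → 0+. -/
open Filter Set Real

/-- For `F̄(x) = r1 x^{-r2} (log x)^{r3}`, the function
`G(y) = r1^{1/r2} r2^{-r3/r2} y^{-1/r2} (log(1/y))^{r3/r2}` is an asymptotic inverse: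
`F̄(G(y))/y → 1` as `y → 0+`. -/
theorem stmt3 (r1 r2 r3 : ℝ) (hr1 : 0 < r1) (hr2 : 0 < r2) :
    Tendsto (fun y : ℝ =>
        (r1 * (r1 ^ (1/r2) * r2 ^ (-(r3/r2)) * y ^ (-(1/r2)) * (Real.log (1/y)) ^ (r3/r2)) ^ (-r2)
          * (Real.log (r1 ^ (1/r2) * r2 ^ (-(r3/r2)) * y ^ (-(1/r2)) * (Real.log (1/y)) ^ (r3/r2))) ^ r3)
          / y)
      (nhdsWithin 0 (Set.Ioi 0)) (nhds 1) := by
  have hr2' : r2 ≠ 0 := hr2.ne'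
  have hCpos : (0:ℝ) < r1 ^ (1/r2) * r2 ^ (-(r3/r2)) := by positivity
  set C : ℝ := r1 ^ (1/r2) * r2 ^ (-(r3/r2)) with hCdef
  set G : ℝ → ℝ := fun y => C * y ^ (-(1/r2)) * (Real.log (1/y)) ^ (r3/r2) with hGdef
  set f : ℝ → ℝ := fun y => r2 * Real.log (G y) / Real.log (1/y) with hfdef
  -- log(1/y) → ∞
  have hL : Tendsto (fun y : ℝ => Real.log (1/y)) (nhdsWithin 0 (Set.Ioi 0)) atTop := by
    have := Real.tendsto_log_atTop.comp (tendsto_inv_nhdsGT_zero (𝕜 := ℝ))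
    simpa only [Function.comp_def, one_div] using this
  have hmem : ∀ᶠ y in nhdsWithin (0:ℝ) (Set.Ioi 0), y ∈ Set.Ioo (0:ℝ) 1 :=
    Ioo_mem_nhdsGT_of_mem ⟨le_refl 0, zero_lt_one⟩
  -- f tends to 1
  have hftend : Tendsto f (nhdsWithin 0 (Set.Ioi 0)) (nhds 1) := by
    have h1 : Tendsto (fun y : ℝ => r2 * Real.log C / Real.log (1/y))
        (nhdsWithin 0 (Set.Ioi 0)) (nhds 0) := Tendsto.div_atTop tendsto_const_nhds hL
    have h2 : Tendsto (fun y : ℝ => Real.log (Real.log (1/y)) / Real.log (1/y))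
        (nhdsWithin 0 (Set.Ioi 0)) (nhds 0) := by
      have := (Real.isLittleO_log_id_atTop.tendsto_div_nhds_zero).comp hL
      simpa only [Function.comp_def, id_eq] using this
    have hsum : Tendsto (fun y : ℝ => r2 * Real.log C / Real.log (1/y) + 1
        + r3 * (Real.log (Real.log (1/y)) / Real.log (1/y)))
        (nhdsWithin 0 (Set.Ioi 0)) (nhds 1) := by
      have h3 := (h1.add (tendsto_const_nhds (x := (1:ℝ)))).add (h2.const_mul r3)
      simpa only [zero_add, add_zero, mul_zero] using h3
    refine hsum.congr' ?_
    filter_upwards [hmem] with y hy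
    have hy0 : 0 < y := hy.1
    have hLpos : 0 < Real.log (1/y) := Real.log_pos (one_lt_one_div hy0 hy.2)
    have hlogG : Real.log (G y) = Real.log C + (1/r2) * Real.log (1/y)
        + (r3/r2) * Real.log (Real.log (1/y)) := by
      rw [hGdef]
      rw [Real.log_mul (by positivity) (by positivity), Real.log_mul (by positivity) (by positivity),
        Real.log_rpow hy0, Real.log_rpow hLpos]
      rw [show Real.log y = -Real.log (1/y) by rw [Real.log_div one_ne_zero hy0.ne', Real.log_one]; ring]
      ring
    rw [hfdef]
    simp only
    rw [hlogG]
    field_simp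
  -- eventually log (G y) > 0
  have hfpos : ∀ᶠ y in nhdsWithin (0:ℝ) (Set.Ioi 0), 0 < f y :=
    hftend.eventually (eventually_gt_nhds zero_lt_one)
  -- main eventual equality
  have heq : (fun y : ℝ => (r1 * (G y) ^ (-r2) * (Real.log (G y)) ^ r3) / y)
      =ᶠ[nhdsWithin (0:ℝ) (Set.Ioi 0)] (fun y => (f y) ^ r3) := by
    filter_upwards [hmem, hfpos] with y hy hfy
    have hy0 : 0 < y := hy.1
    have hLpos : 0 < Real.log (1/y) := Real.log_pos (one_lt_one_div hy0 hy.2)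
    have hgpos : 0 < Real.log (G y) := by
      have hfy' : 0 < r2 * Real.log (G y) / Real.log (1/y) := hfy
      rcases div_pos_iff.mp hfy' with ⟨h, -⟩ | ⟨-, h⟩
      · nlinarith
      · linarith
    have hA : (G y) ^ (-r2) = r1⁻¹ * r2 ^ r3 * y * (Real.log (1/y)) ^ (-r3) := by
      rw [hGdef]
      simp only
      rw [Real.mul_rpow (by positivity) (by positivity),
        Real.mul_rpow (by positivity) (by positivity),
        Real.mul_rpow (by positivity) (by positivity),
        ← Real.rpow_mul hr1.le, ← Real.rpow_mul hr2.le, ← Real.rpow_mul hy0.le,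
        ← Real.rpow_mul hLpos.le]
      rw [show 1/r2 * -r2 = -1 by field_simp, show -(r3/r2) * -r2 = r3 by field_simp,
        show -(1/r2) * -r2 = 1 by field_simp, show r3/r2 * -r2 = -r3 by field_simp]
      rw [Real.rpow_neg_one, Real.rpow_one]
    have hfval : f y = r2 * Real.log (G y) / Real.log (1/y) := rfl
    rw [hA, hfval, Real.div_rpow (by positivity) hLpos.le,
      Real.mul_rpow hr2.le hgpos.le, Real.rpow_neg hLpos.le]
    have hLr3 : (0:ℝ) < (Real.log (1/y)) ^ r3 := Real.rpow_pos_of_pos hLpos r3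
    field_simp
  have hcomp : Tendsto (fun y : ℝ => (f y) ^ r3) (nhdsWithin 0 (Set.Ioi 0)) (nhds 1) := by
    have := (Real.continuousAt_rpow_const 1 r3 (Or.inl one_ne_zero)).tendsto.comp hftend
    simpa only [Function.comp_def, Real.one_rpow] using this
  exact hcomp.congr' heq.symm
end

section
/- Let r1 > 0, r2 > 0, r3 ∈ ℝ, r4 > 0 and define F̄(x) = r4 x^{r3} e^{-r1 x^{r2}} for large x. Then G(y) = ( (log(1/y) + log r4 + (r3/r2) log(r1^{-1} log(1/y)))/r1 )^{1/r2} is an asymptotic inverse of F̄, i.e. F̄(G(y))/y → 1 as y → 0+. -/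
open Filter Set Real
open scoped Topology

/-- For `F̄(x) = r4 x^{r3} e^{-r1 x^{r2}}`, the function
`G(y) = ((log(1/y) + log r4 + (r3/r2) log(r1⁻¹ log(1/y)))/r1)^{1/r2}` is an asymptotic
inverse: `F̄(G(y))/y → 1` as `y → 0+`. -/
theorem stmt4 (r1 r2 r3 r4 : ℝ) (hr1 : 0 < r1) (hr2 : 0 < r2) (hr4 : 0 < r4) :
    Tendsto (fun y : ℝ =>
        (r4 * (((Real.log (1/y) + Real.log r4 + (r3/r2) * Real.log (r1⁻¹ * Real.log (1/y))) / r1) ^ (1/r2)) ^ r3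
          * Real.exp (-r1 * ((((Real.log (1/y) + Real.log r4 + (r3/r2) * Real.log (r1⁻¹ * Real.log (1/y))) / r1) ^ (1/r2)) ^ r2)))
          / y)
      (nhdsWithin 0 (Set.Ioi 0)) (nhds 1) := by
  set c := r3 / r2 with hc
  have hL : Tendsto (fun y : ℝ => Real.log (1/y)) (𝓝[>] (0:ℝ)) atTop := by
    have h1 : Tendsto (fun y : ℝ => 1/y) (𝓝[>] (0:ℝ)) atTop := by
      simpa [one_div] using (tendsto_inv_nhdsGT_zero : Tendsto (fun x : ℝ => x⁻¹) (𝓝[>] (0:ℝ)) atTop)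
    exact Real.tendsto_log_atTop.comp h1
  -- the ratio function tends to 1
  have hg : Tendsto (fun t : ℝ => (t + Real.log r4 + c * Real.log (r1⁻¹ * t)) / t)
      atTop (𝓝 1) := by
    have h0 : Tendsto (fun t : ℝ => Real.log t / t) atTop (𝓝 0) :=
      Real.isLittleO_log_id_atTop.tendsto_div_nhds_zero
    have h1 : Tendsto (fun t : ℝ => Real.log (r1⁻¹ * t) / t) atTop (𝓝 0) := by
      have heq : ∀ᶠ t : ℝ in atTop,
          Real.log (r1⁻¹ * t) / t = Real.log r1⁻¹ / t + Real.log t / t := by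
        filter_upwards [eventually_gt_atTop (0:ℝ)] with t ht
        rw [Real.log_mul (by positivity) (ne_of_gt ht), add_div]
      rw [tendsto_congr' heq]
      simpa using (tendsto_const_nhds.div_atTop tendsto_id).add h0
    have heq : ∀ᶠ t : ℝ in atTop,
        (t + Real.log r4 + c * Real.log (r1⁻¹ * t)) / t
          = 1 + Real.log r4 / t + c * (Real.log (r1⁻¹ * t) / t) := by
      filter_upwards [eventually_gt_atTop (0:ℝ)] with t ht
      field_simp
    rw [tendsto_congr' heq]
    have hd : Tendsto (fun t : ℝ => Real.log r4 / t) atTop (𝓝 0) :=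
      tendsto_const_nhds.div_atTop tendsto_id
    have h2 := (((tendsto_const_nhds : Tendsto (fun _ : ℝ => (1:ℝ)) atTop (𝓝 1)).add hd).add (h1.const_mul c))
    simpa using h2
  have hratio : Tendsto (fun y : ℝ =>
      (Real.log (1/y) + Real.log r4 + c * Real.log (r1⁻¹ * Real.log (1/y))) / Real.log (1/y))
      (𝓝[>] (0:ℝ)) (𝓝 1) := hg.comp hL
  have hlim : Tendsto (fun y : ℝ =>
      ((Real.log (1/y) + Real.log r4 + c * Real.log (r1⁻¹ * Real.log (1/y))) / Real.log (1/y)) ^ c)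
      (𝓝[>] (0:ℝ)) (𝓝 1) := by
    have := hratio.rpow (tendsto_const_nhds (x := c)) (Or.inl one_ne_zero)
    simpa using this
  refine hlim.congr' ?_
  have hLpos : ∀ᶠ y : ℝ in 𝓝[>] (0:ℝ), 0 < Real.log (1/y) :=
    hL.eventually (eventually_gt_atTop 0)
  have hNpos : ∀ᶠ y : ℝ in 𝓝[>] (0:ℝ),
      0 < (Real.log (1/y) + Real.log r4 + c * Real.log (r1⁻¹ * Real.log (1/y))) := by
    filter_upwards [hratio.eventually (eventually_gt_nhds (show (0:ℝ) < 1 by norm_num)),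
      hLpos] with y hy hLy
    exact (div_pos_iff.mp hy).resolve_right (fun h => absurd hLy (not_lt.mpr h.2.le)) |>.1
  filter_upwards [hLpos, hNpos, self_mem_nhdsWithin] with y hLy hNy hy
  have hy : 0 < y := hy
  set L := Real.log (1/y) with hLdef
  set N := L + Real.log r4 + c * Real.log (r1⁻¹ * L) with hNdef
  have hA : 0 < N / r1 := div_pos hNy hr1
  have hu : 0 < r1⁻¹ * L := by positivity
  -- rpow computations
  have e1 : ((N / r1) ^ (1/r2)) ^ r2 = N / r1 := by
    rw [← Real.rpow_mul hA.le, one_div_mul_cancel hr2.ne', Real.rpow_one]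
  have e2 : ((N / r1) ^ (1/r2)) ^ r3 = (N / r1) ^ c := by
    rw [← Real.rpow_mul hA.le, hc, one_div, inv_mul_eq_div]
  have e3 : Real.exp (-r1 * (N / r1)) = y * r4⁻¹ * (r1⁻¹ * L) ^ (-c) := by
    have hm : -r1 * (N / r1) = -N := by field_simp
    rw [hm, hNdef]
    rw [show -(L + Real.log r4 + c * Real.log (r1⁻¹ * L))
        = (-L) + (-Real.log r4) + (-(c * Real.log (r1⁻¹ * L))) by ring,
      Real.exp_add, Real.exp_add]
    congr 1
    · congr 1
      · rw [hLdef, one_div, Real.log_inv, neg_neg, Real.exp_log hy]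
      · rw [Real.exp_neg, Real.exp_log hr4]
    · rw [Real.rpow_def_of_pos hu]
      ring_nf
  show (N / L) ^ c
      = r4 * ((N / r1) ^ (1/r2)) ^ r3 * Real.exp (-r1 * ((N / r1) ^ (1/r2)) ^ r2) / y
  rw [e1, e2, e3]
  have hNLeq : N / L = (N / r1) / (r1⁻¹ * L) := by
    field_simp
  rw [hNLeq, Real.div_rpow hA.le hu.le, Real.rpow_neg hu.le]
  field_simp
end

section
/- Let v : (0,∞) → (0,∞) with v(t) → ∞ as t → 0+, and for each t > 0 let N(t) be a positive-integer-valued random variable such that for every ε ∈ (0,1), P(N(t) < (1-ε)v(t)) → 0 and P(N(t) > (1+ε)v(t)) → 0 as t → 0+. Suppose p : (0,∞) → [0,1] satisfies v(t)·(1 - p(t)) → x as t → 0+ for some x > 0. Then E[p(t)^{N(t)}] → e^{-x} as t → 0+. -/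
open Filter Set Real MeasureTheory ProbabilityTheory

private lemma glim' : Tendsto (fun s : ℝ => if s = 0 then (-1:ℝ) else Real.log (1 - s) / s)
    (nhds 0) (nhds (-1)) := by
  have hd : HasDerivAt (fun y : ℝ => Real.log (1 - y)) (-1) 0 := by
    have h1 : HasDerivAt (fun y : ℝ => 1 - y) (-1) 0 := by
      simpa using (hasDerivAt_id (0:ℝ)).const_sub 1
    have := (Real.hasDerivAt_log (by norm_num : (1:ℝ) - 0 ≠ 0)).comp 0 h1
    exact this.congr_deriv (by norm_num)
  have hslope := hasDerivAt_iff_tendsto_slope.mp hd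
  rw [← nhdsNE_sup_pure 0, tendsto_sup]
  constructor
  · refine hslope.congr' ?_
    filter_upwards [self_mem_nhdsWithin] with s hs
    simp only [mem_compl_iff, mem_singleton_iff] at hs
    simp [slope, hs, vsub_eq_sub, div_eq_inv_mul]
  · simpa using tendsto_pure_nhds (fun s : ℝ => if s = 0 then (-1:ℝ) else Real.log (1 - s) / s) 0


/-- If `N(t)/v(t) → 1` in the stated probability sense and
`v(t)(1 - p(t)) → x > 0`, then `E[p(t)^{N(t)}] → e^{-x}` as `t → 0+`. -/
theorem stmt6 {Ω : Type*} [MeasureSpace Ω] [IsProbabilityMeasure (ℙ : Measure Ω)]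
    (v : ℝ → ℝ) (N : ℝ → Ω → ℕ) (p : ℝ → ℝ) (x : ℝ)
    (hv : Tendsto v (nhdsWithin 0 (Set.Ioi 0)) atTop)
    (hmeas : ∀ t, Measurable (N t))
    (hNpos : ∀ t ω, 0 < N t ω)
    (hlow : ∀ ε ∈ Set.Ioo (0:ℝ) 1,
      Tendsto (fun t => ((ℙ : Measure Ω) {ω | (N t ω : ℝ) < (1 - ε) * v t}).toReal)
        (nhdsWithin 0 (Set.Ioi 0)) (nhds 0))
    (hup : ∀ ε ∈ Set.Ioo (0:ℝ) 1,
      Tendsto (fun t => ((ℙ : Measure Ω) {ω | (1 + ε) * v t < (N t ω : ℝ)}).toReal)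
        (nhdsWithin 0 (Set.Ioi 0)) (nhds 0))
    (hp : ∀ t, p t ∈ Set.Icc (0:ℝ) 1)
    (hx : 0 < x)
    (hlim : Tendsto (fun t => v t * (1 - p t)) (nhdsWithin 0 (Set.Ioi 0)) (nhds x)) :
    Tendsto (fun t => ∫ ω, (p t) ^ (N t ω) ∂(ℙ : Measure Ω))
      (nhdsWithin 0 (Set.Ioi 0)) (nhds (Real.exp (-x))) := by
  set l := nhdsWithin (0:ℝ) (Set.Ioi 0) with hl
  -- eventually v t > 0
  have hvpos : ∀ᶠ t in l, 0 < v t := hv.eventually_gt_atTop 0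
  have h1p : Tendsto (fun t => 1 - p t) l (nhds 0) := by
    have h := hlim.div_atTop hv
    apply h.congr'
    filter_upwards [hvpos] with t ht
    field_simp
  have hppos : ∀ᶠ t in l, 0 < p t := by
    filter_upwards [h1p.eventually_lt_const (by norm_num : (0:ℝ) < 1/2)] with t ht
    linarith
  -- v log p → -x
  have hvlog : Tendsto (fun t => v t * Real.log (p t)) l (nhds (-x)) := by
    have key : ∀ᶠ t in l, v t * Real.log (p t)
        = (v t * (1 - p t)) *
          (if 1 - p t = 0 then (-1:ℝ) else Real.log (1 - (1 - p t)) / (1 - p t)) := by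
      filter_upwards with t
      by_cases h : 1 - p t = 0
      · have hpt : p t = 1 := by linarith
        simp [h, hpt]
      · rw [if_neg h, show (1 : ℝ) - (1 - p t) = p t by ring]
        field_simp
    have hc := hlim.mul (glim'.comp h1p)
    rw [show x * (-1) = -x by ring] at hc
    exact hc.congr' (key.mono fun t h => h.symm)
  -- rpow limit
  have hrpow : ∀ c : ℝ, Tendsto (fun t => (p t) ^ (c * v t)) l (nhds (Real.exp (-(c*x)))) := by
    intro c
    have h2 : Tendsto (fun t => Real.exp (Real.log (p t) * (c * v t))) l
        (nhds (Real.exp (-(c*x)))) := by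
      apply (Real.continuous_exp.tendsto _).comp
      have h3 : Tendsto (fun t => c * (v t * Real.log (p t))) l (nhds (c * (-x))) :=
        hvlog.const_mul c
      rw [show c * (-x) = -(c*x) by ring] at h3
      exact h3.congr (fun t => by ring)
    refine h2.congr' ?_
    filter_upwards [hppos] with t ht
    rw [Real.rpow_def_of_pos ht]
  -- integrability
  have hfint : ∀ t, Integrable (fun ω => p t ^ N t ω) (ℙ : Measure Ω) := by
    intro t
    refine (integrable_const (1:ℝ)).mono'
      ((measurable_from_top.comp (hmeas t) : Measurable fun ω => p t ^ N t ω)).aestronglyMeasurable ?_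
    filter_upwards with ω
    rw [Real.norm_eq_abs, abs_of_nonneg (pow_nonneg (hp t).1 _)]
    exact pow_le_one₀ (hp t).1 (hp t).2
  -- upper bound
  have hub : ∀ ε : ℝ, ∀ᶠ t in l,
      ∫ ω, p t ^ N t ω ∂(ℙ:Measure Ω)
        ≤ ((ℙ:Measure Ω) {ω | (N t ω:ℝ) < (1-ε)*v t}).toReal + (p t)^((1-ε)*v t) := by
    intro ε
    filter_upwards [hppos] with t hpt
    set A := {ω : Ω | (N t ω:ℝ) < (1-ε)*v t} with hA
    have hAm : MeasurableSet A :=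
      measurableSet_lt (measurable_from_top.comp (hmeas t)) measurable_const
    have hbound : ∀ ω, p t ^ N t ω ≤ A.indicator (fun _ => (1:ℝ)) ω + (p t)^((1-ε)*v t) := by
      intro ω
      by_cases hω : ω ∈ A
      · rw [Set.indicator_of_mem hω]
        have h1 := Real.rpow_nonneg (le_of_lt hpt) ((1-ε)*v t)
        have h2 := pow_le_one₀ (hp t).1 (hp t).2 (n := N t ω)
        linarith
      · rw [Set.indicator_of_notMem hω]
        have hge : (1-ε)*v t ≤ (N t ω : ℝ) := not_lt.mp hω
        have h2 : (p t) ^ ((N t ω : ℝ)) ≤ (p t)^((1-ε)*v t) :=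
          Real.rpow_le_rpow_of_exponent_ge hpt (hp t).2 hge
        rw [Real.rpow_natCast] at h2
        linarith
    calc ∫ ω, p t ^ N t ω ∂(ℙ:Measure Ω)
        ≤ ∫ ω, (A.indicator (fun _ => (1:ℝ)) ω + (p t)^((1-ε)*v t)) ∂(ℙ:Measure Ω) :=
          integral_mono (hfint t)
            (((integrable_const (1:ℝ)).indicator hAm).add (integrable_const _)) hbound
      _ = ((ℙ:Measure Ω) A).toReal + (p t)^((1-ε)*v t) := by
          rw [integral_add ((integrable_const (1:ℝ)).indicator hAm) (integrable_const _),
            integral_indicator_const _ hAm, integral_const]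
          simp
          rfl
  -- lower bound
  have hlb : ∀ ε : ℝ, ∀ᶠ t in l,
      (p t)^((1+ε)*v t) * (1 - ((ℙ:Measure Ω) {ω | (1+ε)*v t < (N t ω:ℝ)}).toReal)
        ≤ ∫ ω, p t ^ N t ω ∂(ℙ:Measure Ω) := by
    intro ε
    filter_upwards [hppos] with t hpt
    set B := {ω : Ω | (N t ω:ℝ) ≤ (1+ε)*v t} with hB
    have hBm : MeasurableSet B :=
      measurableSet_le (measurable_from_top.comp (hmeas t)) measurable_const
    have hBc : Bᶜ = {ω | (1+ε)*v t < (N t ω:ℝ)} := by ext ω; simp [hB, not_le]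
    have hbound : ∀ ω, B.indicator (fun _ => (p t)^((1+ε)*v t)) ω ≤ p t ^ N t ω := by
      intro ω
      by_cases hω : ω ∈ B
      · rw [Set.indicator_of_mem hω]
        have hle : (N t ω : ℝ) ≤ (1+ε)*v t := hω
        have h2 := Real.rpow_le_rpow_of_exponent_ge hpt (hp t).2 hle
        rw [Real.rpow_natCast] at h2
        linarith
      · rw [Set.indicator_of_notMem hω]
        exact pow_nonneg (hp t).1 _
    have hsum : ((ℙ:Measure Ω) B).toReal + ((ℙ:Measure Ω) Bᶜ).toReal = 1 := by
      rw [← ENNReal.toReal_add (measure_ne_top _ _) (measure_ne_top _ _),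
        measure_add_measure_compl hBm]
      simp
    calc (p t)^((1+ε)*v t) * (1 - ((ℙ:Measure Ω) {ω | (1+ε)*v t < (N t ω:ℝ)}).toReal)
        = ∫ ω, B.indicator (fun _ => (p t)^((1+ε)*v t)) ω ∂(ℙ:Measure Ω) := by
          rw [integral_indicator_const _ hBm, smul_eq_mul, ← hBc, mul_comm]
          congr 1
          rw [Measure.real_def]; linarith
      _ ≤ ∫ ω, p t ^ N t ω ∂(ℙ:Measure Ω) :=
          integral_mono ((integrable_const _).indicator hBm) (hfint t) hbound
  -- conclusion
  rw [Metric.tendsto_nhds]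
  intro δ hδ
  obtain ⟨ε, hε, hεF, hεG⟩ : ∃ ε, ε ∈ Set.Ioo (0:ℝ) 1 ∧
      Real.exp (-((1-ε)*x)) < Real.exp (-x) + δ ∧ Real.exp (-x) - δ < Real.exp (-((1+ε)*x)) := by
    have hF : Tendsto (fun e : ℝ => Real.exp (-((1-e)*x))) (nhds 0) (nhds (Real.exp (-x))) := by
      have hc : Continuous fun e : ℝ => Real.exp (-((1-e)*x)) := by continuity
      simpa using hc.tendsto 0
    have hG : Tendsto (fun e : ℝ => Real.exp (-((1+e)*x))) (nhds 0) (nhds (Real.exp (-x))) := by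
      have hc : Continuous fun e : ℝ => Real.exp (-((1+e)*x)) := by continuity
      simpa using hc.tendsto 0
    have h1 := hF.eventually_lt_const (lt_add_of_pos_right _ hδ)
    have h2 := hG.eventually_const_lt (sub_lt_self _ hδ)
    have h3 : ∀ᶠ e : ℝ in nhdsWithin 0 (Set.Ioi 0), e ∈ Set.Ioo (0:ℝ) 1 :=
      Ioo_mem_nhdsGT_of_mem (by norm_num : (0:ℝ) ∈ Set.Ico (0:ℝ) 1)
    obtain ⟨e, he1, he2, he3⟩ :=
      (h3.and ((h1.filter_mono nhdsWithin_le_nhds).and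
        (h2.filter_mono nhdsWithin_le_nhds))).exists
    exact ⟨e, he1, he2, he3⟩
  have hU : Tendsto (fun t => ((ℙ:Measure Ω) {ω | (N t ω:ℝ) < (1-ε)*v t}).toReal
      + (p t)^((1-ε)*v t)) l (nhds (0 + Real.exp (-((1-ε)*x)))) :=
    (hlow ε hε).add (hrpow (1-ε))
  rw [zero_add] at hU
  have hL : Tendsto (fun t => (p t)^((1+ε)*v t)
      * (1 - ((ℙ:Measure Ω) {ω | (1+ε)*v t < (N t ω:ℝ)}).toReal)) l
      (nhds (Real.exp (-((1+ε)*x)) * (1 - 0))) :=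
    (hrpow (1+ε)).mul (tendsto_const_nhds.sub (hup ε hε))
  rw [sub_zero, mul_one] at hL
  filter_upwards [hub ε, hlb ε, hU.eventually_lt_const hεF, hL.eventually_const_lt hεG]
    with t h1 h2 h3 h4
  rw [Real.dist_eq, abs_lt]
  constructor <;> linarith
end

section
/- Let v : (0,∞) → (0,∞) be nonincreasing with v(2^{-ℓ}) ≥ 2^{ℓ+1} for all large ℓ, and suppose ∫_{0+} v(t)^{1+ε₀} e^{-t^{-δ₀}} dt < ∞ for some ε₀ > 0, δ₀ ∈ (0,1). Then for any d₀ > 1/ε₀, the series Σ_ℓ [ v(2^{-(ℓ+1)})^{1+ε₀} e^{-2^{(ℓ+2)δ₀}} 2^{-(ℓ+2)} + 2^{ℓ+1} v(2^{-(ℓ+1)})^{-d₀ε₀} ] converges. -/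
open Filter Set Real MeasureTheory

/-- The key summability estimate: if `v` is nonincreasing on `(0,∞)` with
`v(2^{-ℓ}) ≥ 2^{ℓ+1}` for large `ℓ` and `∫_{0+} v(t)^{1+ε₀} e^{-t^{-δ₀}} dt < ∞`,
then for any `d₀ > 1/ε₀` the series
`Σ_ℓ [v(2^{-(ℓ+1)})^{1+ε₀} e^{-2^{(ℓ+2)δ₀}} 2^{-(ℓ+2)} + 2^{ℓ+1} v(2^{-(ℓ+1)})^{-d₀ε₀}]`
converges. -/
theorem stmt15 (v : ℝ → ℝ) (ε₀ δ₀ d₀ : ℝ)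
    (hε₀ : 0 < ε₀) (hδ₀ : δ₀ ∈ Set.Ioo (0:ℝ) 1) (hd₀ : 1 / ε₀ < d₀)
    (hvpos : ∀ t > (0:ℝ), 0 < v t)
    (hanti : AntitoneOn v (Set.Ioi 0))
    (hgrow : ∀ᶠ ℓ : ℕ in atTop, (2:ℝ) ^ ((ℓ:ℝ) + 1) ≤ v ((2:ℝ) ^ (-(ℓ:ℝ))))
    (hint : ∃ c > (0:ℝ),
      IntegrableOn (fun t => v t ^ (1 + ε₀) * Real.exp (-t ^ (-δ₀))) (Set.Ioc 0 c)) :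
    Summable (fun ℓ : ℕ =>
      v ((2:ℝ) ^ (-((ℓ:ℝ) + 1))) ^ (1 + ε₀) * Real.exp (-(2:ℝ) ^ (((ℓ:ℝ) + 2) * δ₀))
          * (2:ℝ) ^ (-((ℓ:ℝ) + 2))
        + (2:ℝ) ^ ((ℓ:ℝ) + 1) * v ((2:ℝ) ^ (-((ℓ:ℝ) + 1))) ^ (-(d₀ * ε₀))) := by
  obtain ⟨c, hc, hint⟩ := hint
  have hδpos : 0 < δ₀ := hδ₀.1
  have hp1 : 1 < d₀ * ε₀ := by
    rw [div_lt_iff₀ hε₀] at hd₀; linarith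
  set p := d₀ * ε₀ with hpdef
  set F : ℝ → ℝ := fun t => v t ^ (1 + ε₀) * Real.exp (-t ^ (-δ₀)) with hF
  set a : ℕ → ℝ := fun ℓ => (2:ℝ) ^ (-((ℓ:ℝ) + 1)) with ha
  set f1 : ℕ → ℝ := fun ℓ =>
      v ((2:ℝ) ^ (-((ℓ:ℝ) + 1))) ^ (1 + ε₀) * Real.exp (-(2:ℝ) ^ (((ℓ:ℝ) + 2) * δ₀))
          * (2:ℝ) ^ (-((ℓ:ℝ) + 2)) with hf1
  set f2 : ℕ → ℝ := fun ℓ =>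
      (2:ℝ) ^ ((ℓ:ℝ) + 1) * v ((2:ℝ) ^ (-((ℓ:ℝ) + 1))) ^ (-p) with hf2
  have hapos : ∀ ℓ, 0 < a ℓ := fun ℓ => Real.rpow_pos_of_pos two_pos _
  have hadec : ∀ {i j : ℕ}, i ≤ j → a j ≤ a i := by
    intro i j h
    apply Real.rpow_le_rpow_of_exponent_le one_le_two
    have : (i:ℝ) ≤ j := Nat.cast_le.mpr h
    linarith
  have hanext : ∀ k : ℕ, a (k + 1) = (2:ℝ) ^ (-((k:ℝ) + 2)) := by
    intro k
    simp only [ha]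
    push_cast
    ring_nf
  -- choose N
  obtain ⟨N₁, hN₁⟩ := eventually_atTop.mp hgrow
  obtain ⟨N₂, hN₂⟩ := exists_pow_lt_of_lt_one hc (by norm_num : (2:ℝ)⁻¹ < 1)
  set N := max N₁ N₂ with hN
  have haN : ∀ ℓ, N ≤ ℓ → a ℓ ≤ c := by
    intro ℓ hℓ
    have h1 : a ℓ ≤ a N₂ := hadec (le_trans (le_max_right _ _) hℓ)
    have h2 : a N₂ ≤ (2:ℝ)⁻¹ ^ N₂ := by
      have e : ((2:ℝ)⁻¹) ^ N₂ = (2:ℝ) ^ (-(N₂:ℝ)) := by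
        rw [inv_pow, ← Real.rpow_natCast 2 N₂, ← Real.rpow_neg (by norm_num)]
      rw [e]
      apply Real.rpow_le_rpow_of_exponent_le one_le_two
      linarith
    linarith
  have hgrow' : ∀ ℓ, N ≤ ℓ → (2:ℝ) ^ ((ℓ:ℝ) + 2) ≤ v (a ℓ) := by
    intro ℓ hℓ
    have hN₁ℓ : N₁ ≤ ℓ + 1 := le_trans (le_max_left N₁ N₂) (by omega)
    have h := hN₁ (ℓ + 1) hN₁ℓ
    have e1 : ((ℓ + 1 : ℕ) : ℝ) = (ℓ:ℝ) + 1 := by push_cast; ring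
    rw [e1] at h
    have e2 : (ℓ:ℝ) + 1 + 1 = (ℓ:ℝ) + 2 := by ring
    have e3 : -((ℓ:ℝ) + 1) = -((ℓ:ℝ) + 1) := rfl
    rw [e2] at h
    simpa [ha] using h
  -- nonnegativity of terms
  have hf1nonneg : ∀ k, 0 ≤ f1 k := by
    intro k
    apply mul_nonneg (mul_nonneg (Real.rpow_nonneg (hvpos _ (Real.rpow_pos_of_pos two_pos _)).le _)
      (Real.exp_pos _).le) (Real.rpow_nonneg (by norm_num) _)
  have hf2nonneg : ∀ k, 0 ≤ f2 k := by
    intro k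
    apply mul_nonneg (Real.rpow_nonneg (by norm_num) _)
      (Real.rpow_nonneg (hvpos _ (Real.rpow_pos_of_pos two_pos _)).le _)
  -- key per-term integral bound
  have key1 : ∀ k, N ≤ k → f1 k ≤ ∫ t in Ioc (a (k + 1)) (a k), F t := by
    intro k hk
    have hsub : Ioc (a (k + 1)) (a k) ⊆ Ioc 0 c := fun t ht =>
      ⟨lt_trans (hapos _) ht.1, le_trans ht.2 (haN k hk)⟩
    have hFi : IntegrableOn F (Ioc (a (k + 1)) (a k)) := hint.mono_set hsub
    set C : ℝ := v (a k) ^ (1 + ε₀) * Real.exp (-(2:ℝ) ^ (((k:ℝ) + 2) * δ₀)) with hC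
    have hpt : ∀ t ∈ Ioc (a (k + 1)) (a k), C ≤ F t := by
      intro t ht
      have ht0 : 0 < t := lt_trans (hapos _) ht.1
      have hv : v (a k) ≤ v t := hanti (mem_Ioi.mpr ht0) (mem_Ioi.mpr (hapos k)) ht.2
      have h1 : v (a k) ^ (1 + ε₀) ≤ v t ^ (1 + ε₀) :=
        Real.rpow_le_rpow (hvpos _ (hapos k)).le hv (by linarith)
      have h2 : Real.exp (-(2:ℝ) ^ (((k:ℝ) + 2) * δ₀)) ≤ Real.exp (-t ^ (-δ₀)) := by
        apply Real.exp_le_exp.mpr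
        apply neg_le_neg
        have hb : t ^ (-δ₀) ≤ (a (k + 1)) ^ (-δ₀) :=
          Real.rpow_le_rpow_of_nonpos (hapos (k + 1)) ht.1.le (by linarith)
        have he : (a (k + 1)) ^ (-δ₀) = (2:ℝ) ^ (((k:ℝ) + 2) * δ₀) := by
          rw [hanext k, ← Real.rpow_mul (by norm_num)]
          congr 1
          ring
        linarith [he ▸ hb]
      calc C ≤ v t ^ (1 + ε₀) * Real.exp (-t ^ (-δ₀)) := by
            apply mul_le_mul h1 h2 (Real.exp_pos _).le
              (Real.rpow_nonneg (hvpos _ ht0).le _)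
        _ = F t := rfl
    have hCint : IntegrableOn (fun _ : ℝ => C) (Ioc (a (k + 1)) (a k)) := by
      apply (integrableOn_const_iff).mpr
      right
      exact measure_Ioc_lt_top
    have hconst : ∫ _ in Ioc (a (k + 1)) (a k), C = C * (2:ℝ) ^ (-((k:ℝ) + 2)) := by
      rw [setIntegral_const, measureReal_def, Real.volume_Ioc, smul_eq_mul]
      rw [ENNReal.toReal_ofReal (by linarith [hadec (Nat.le_succ k)])]
      have hgap : a k - a (k + 1) = (2:ℝ) ^ (-((k:ℝ) + 2)) := by
        have h1 : a k = 2 * (2:ℝ) ^ (-((k:ℝ) + 2)) := by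
          show (2:ℝ) ^ (-((k:ℝ) + 1)) = _
          rw [show -((k:ℝ) + 1) = 1 + -((k:ℝ) + 2) by ring, Real.rpow_add two_pos,
            Real.rpow_one]
        rw [h1, hanext k]
        ring
      rw [hgap]
      ring
    calc f1 k = ∫ _ in Ioc (a (k + 1)) (a k), C := by rw [hconst]
      _ ≤ ∫ t in Ioc (a (k + 1)) (a k), F t :=
          setIntegral_mono_on hCint hFi measurableSet_Ioc hpt
  -- summability of the integrals over the disjoint intervals (tail at N)
  set s : ℕ → Set ℝ := fun ℓ => Ioc (a (ℓ + N + 1)) (a (ℓ + N)) with hs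
  have hdisj : Pairwise (Function.onFun Disjoint s) := by
    have key : ∀ i j : ℕ, i < j → Disjoint (s i) (s j) := by
      intro i j hij
      apply Set.disjoint_of_subset (Set.Ioc_subset_Ioi_self) (Set.Ioc_subset_Iic_self.trans _)
        (Disjoint.symm (Iic_disjoint_Ioi le_rfl))
      exact Iic_subset_Iic.mpr (hadec (by omega))
    intro i j hij
    rcases lt_or_gt_of_ne hij with h | h
    · exact key i j h
    · exact (key j i h).symm
  have hUsub : (⋃ ℓ, s ℓ) ⊆ Ioc 0 c := by
    apply Set.iUnion_subset
    intro ℓ t ht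
    exact ⟨lt_trans (hapos _) ht.1, le_trans ht.2 (haN _ (by omega))⟩
  have hg : Summable (fun ℓ => ∫ t in s ℓ, F t) :=
    (hasSum_integral_iUnion (fun ℓ => measurableSet_Ioc) hdisj
      (hint.mono_set hUsub)).summable
  have h1 : Summable f1 := by
    rw [← summable_nat_add_iff N]
    exact hg.of_nonneg_of_le (fun ℓ => hf1nonneg _) (fun ℓ => key1 (ℓ + N) (by omega))
  -- second term
  have bound2 : ∀ k, N ≤ k →
      f2 k ≤ (2:ℝ) ^ (1 - 2 * p) * ((2:ℝ) ^ (1 - p)) ^ k := by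
    intro k hk
    have hvk : (2:ℝ) ^ ((k:ℝ) + 2) ≤ v (a k) := hgrow' k hk
    have h1 : v (a k) ^ (-p) ≤ ((2:ℝ) ^ ((k:ℝ) + 2)) ^ (-p) :=
      Real.rpow_le_rpow_of_nonpos (Real.rpow_pos_of_pos two_pos _) hvk (by linarith)
    have h2 : f2 k ≤ (2:ℝ) ^ ((k:ℝ) + 1) * ((2:ℝ) ^ ((k:ℝ) + 2)) ^ (-p) := by
      apply mul_le_mul_of_nonneg_left _ (Real.rpow_nonneg (by norm_num) _)
      exact h1
    refine h2.trans (le_of_eq ?_)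
    rw [← Real.rpow_mul (by norm_num : (0:ℝ) ≤ 2), ← Real.rpow_add two_pos,
      ← Real.rpow_natCast ((2:ℝ) ^ (1 - p)) k, ← Real.rpow_mul (by norm_num : (0:ℝ) ≤ 2),
      ← Real.rpow_add two_pos]
    congr 1
    ring
  have hr0 : (0:ℝ) ≤ (2:ℝ) ^ (1 - p) := Real.rpow_nonneg (by norm_num) _
  have hr1 : (2:ℝ) ^ (1 - p) < 1 :=
    Real.rpow_lt_one_of_one_lt_of_neg one_lt_two (by linarith)
  have hmaj : Summable (fun k : ℕ => (2:ℝ) ^ (1 - 2 * p) * ((2:ℝ) ^ (1 - p)) ^ k) :=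
    (summable_geometric_of_lt_one hr0 hr1).mul_left _
  have h2 : Summable f2 := by
    rw [← summable_nat_add_iff N]
    exact ((summable_nat_add_iff N).mpr hmaj).of_nonneg_of_le
      (fun ℓ => hf2nonneg _) (fun ℓ => bound2 (ℓ + N) (by omega))
  exact h1.add h2
end
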